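/- arXiv:1809.05851 — 3 statements merged into one kernel-verified Lean document; each statement's English description precedes it below -/
import Mathlib

section
/- Let R be an integral domain with field of fractions K, and let I₁, I₂, J be invertible fractional ideals of R in K with I₁ ≤ J, I₂ ≤ J, and I₁·J⁻¹ + I₂·J⁻¹ = 1 (the unit fractional ideal R). Then I₁ ⊓ I₂ = I₁·I₂·J⁻¹, where ⊓ denotes the intersection (inf) of fractional ideals. In particular, I₁ ⊓ I₂ is an invertible fractional ideal. -/
/-!
Put `A = I₁J⁻¹` and `B = I₂J⁻¹`, so that `I₁ = AJ`, `I₂ = BJ` and `A + B = 1`. Comaximality gives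
`A ⊓ B = (A ⊓ B)(A + B) ≤ BA + AB = AB`, and `AB ≤ A ⊓ B` as `A, B ≤ A + B = 1`. Multiplication by
the unit `J` is an order automorphism, so `I₁ ⊓ I₂ = (A ⊓ B)J = ABJ = I₁I₂J⁻¹`.
-/

open nonZeroDivisors

theorem IsUnit.inf_mul {M : Type*} [Monoid M] [Lattice M] [MulRightMono M] {u : M}
    (hu : IsUnit u) (a b : M) : (a ⊓ b) * u = a * u ⊓ b * u := by
  obtain ⟨u, rfl⟩ := hu
  exact ((Units.mulRight u).toOrderIso (fun _ _ h ↦ _root_.mul_le_mul_left h _)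
    (fun _ _ h ↦ _root_.mul_le_mul_left h _)).map_inf a b

namespace FractionalIdeal

variable {R : Type*} [CommRing R] {S : Submonoid R} {P : Type*} [CommRing P] [Algebra R P]

theorem inf_eq_mul_of_add_eq_one {I J : FractionalIdeal S P} (h : I + J = 1) :
    I ⊓ J = I * J := by
  have hI : I ≤ 1 := h ▸ le_self_add
  have hJ : J ≤ 1 := h ▸ le_add_self
  refine le_antisymm ?_ (le_inf (mul_le_of_le_one_right' hJ) (mul_le_of_le_one_left' hI))
  calc I ⊓ J = (I ⊓ J) * I + (I ⊓ J) * J := by rw [← mul_add, h, mul_one]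
    _ ≤ J * I + I * J :=
      add_le_add (mul_le_mul_left inf_le_right I) (mul_le_mul_left inf_le_left J)
    _ = I * J := by rw [mul_comm J I, ← sup_eq_add, sup_idem]

end FractionalIdeal

theorem inf_eq_mul_mul_inv_of_comaximal_general
    {R K : Type*} [CommRing R] [IsDomain R] [Field K] [Algebra R K] [IsFractionRing R K]
    (I₁ I₂ J : FractionalIdeal R⁰ K)
    (hI₁ : IsUnit I₁) (hI₂ : IsUnit I₂) (hJ : IsUnit J)
    (hco : I₁ * J⁻¹ + I₂ * J⁻¹ = 1) :
    I₁ ⊓ I₂ = I₁ * I₂ * J⁻¹ ∧ IsUnit (I₁ ⊓ I₂) := by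
  have hJJ : J * J⁻¹ = 1 := (FractionalIdeal.mul_inv_cancel_iff_isUnit K).mpr hJ
  have hcancel (I : FractionalIdeal R⁰ K) : I * J⁻¹ * J = I := by
    rw [mul_assoc, mul_comm J⁻¹, hJJ, mul_one]
  have hinf : I₁ ⊓ I₂ = I₁ * I₂ * J⁻¹ :=
    calc I₁ ⊓ I₂ = I₁ * J⁻¹ * J ⊓ I₂ * J⁻¹ * J := by rw [hcancel, hcancel]
      _ = (I₁ * J⁻¹ ⊓ I₂ * J⁻¹) * J := (hJ.inf_mul _ _).symm
      _ = I₁ * J⁻¹ * (I₂ * J⁻¹) * J := by rw [FractionalIdeal.inf_eq_mul_of_add_eq_one hco]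
      _ = I₁ * I₂ * J⁻¹ := by rw [mul_comm I₁, mul_assoc, mul_assoc, hcancel, mul_comm]
  exact ⟨hinf, hinf ▸ (hI₁.mul hI₂).mul (.of_mul_eq_one J ((mul_comm _ _).trans hJJ))⟩

/-- Let `R` be an integral domain with fraction field `K`, and let `I₁, I₂, J` be invertible
fractional ideals with `I₁ ≤ J`, `I₂ ≤ J` and `I₁·J⁻¹ + I₂·J⁻¹ = 1`.  Then the intersection
`I₁ ⊓ I₂` equals `I₁·I₂·J⁻¹`; in particular it is an invertible fractional ideal. -/
theorem inf_eq_mul_mul_inv_of_comaximal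
    {R K : Type*} [CommRing R] [IsDomain R] [Field K] [Algebra R K] [IsFractionRing R K]
    (I₁ I₂ J : FractionalIdeal R⁰ K)
    (hI₁ : IsUnit I₁) (hI₂ : IsUnit I₂) (hJ : IsUnit J)
    (h₁ : I₁ ≤ J) (h₂ : I₂ ≤ J)
    (hco : I₁ * J⁻¹ + I₂ * J⁻¹ = 1) :
    I₁ ⊓ I₂ = I₁ * I₂ * J⁻¹ ∧ IsUnit (I₁ ⊓ I₂) :=
  inf_eq_mul_mul_inv_of_comaximal_general I₁ I₂ J hI₁ hI₂ hJ hco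
end

section
/- Let k be a field. Consider a commutative square of separated finite-type k-schemes with maps h_u : N(00) → N(01), v_l : N(00) → N(10), v_r : N(01) → N(11), h_d : N(10) → N(11), satisfying v_r ∘ h_u = h_d ∘ v_l. Suppose given open subschemes S(ij) ⊆ N(ij) for i, j ∈ {0,1}, each scheme-theoretically dense in N(ij), such that the four maps carry S(ij) into the corresponding S(i'j') and the induced square of the S(ij) is an elementary Nisnevich square (in particular the induced morphism S(00) → S(10) ×_{S(11)} S(01) is an isomorphism). Then, as open subschemes of N(00), h_u⁻¹(S(01)) ∩ v_l⁻¹(S(10)) = S(00). -/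
open AlgebraicGeometry CategoryTheory CategoryTheory.Limits

/-!
Let `W = h_u⁻¹(S(01)) ∩ v_l⁻¹(S(10))`. The restrictions of `h_u` and `v_l` to `W` form a cone over
the cartesian square of the `S(ij)`, hence factor through a map `t : W ⟶ S(00)` retracting the
inclusion `S(00) ⊆ W`. The two maps `t ≫ S(00).ι` and `W.ι` into `N(00)` agree after the separated
morphism `h_u`, so their equalizer is a closed subscheme of `W`; it contains the scheme-theoretically
dense `S(00)`, hence is all of `W`. Thus `W.ι` factors through `S(00)`, i.e. `W ≤ S(00)`.
-/

/-- A morphism of schemes `f : X ⟶ Y` is *scheme-theoretically dominant* if the canonical map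
`O_Y → f_* O_X` is injective. -/
def SchemeTheoreticallyDominant {X Y : Scheme} (f : X ⟶ Y) : Prop :=
  ∀ V : Y.Opens, Function.Injective (f.app V)

/-- An elementary Nisnevich square: `f` is étale, `b` is an open immersion, the square is
cartesian, and `f` restricts to an isomorphism over the reduced complement of `b`. -/
def IsElemNisnevichSquare {S00 S01 S10 S11 : Scheme}
    (a : S00 ⟶ S01) (c : S00 ⟶ S10) (f : S01 ⟶ S11) (b : S10 ⟶ S11) : Prop :=
  IsEtale f ∧ IsOpenImmersion b ∧ IsPullback a c f b ∧
  ∀ (Z : Scheme) (ζ : Z ⟶ S11), IsClosedImmersion ζ → IsReduced Z →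
    Set.range ζ.base = (Set.range b.base)ᶜ →
    IsIso (pullback.fst ζ f)

/-- Separated and of finite type over the base. -/
def SepFT {X B : Scheme} (p : X ⟶ B) : Prop :=
  IsSeparated p ∧ LocallyOfFiniteType p ∧ QuasiCompact p

lemma SchemeTheoreticallyDominant.of_comp {X Y Z : Scheme} {f : X ⟶ Y} {g : Y ⟶ Z}
    (h : SchemeTheoreticallyDominant (f ≫ g)) : SchemeTheoreticallyDominant g :=
  fun V ↦ .of_comp (f := f.app (g ⁻¹ᵁ V)) (g := g.app V) (h V)

lemma SchemeTheoreticallyDominant.of_comp_of_isOpenImmersion {X Y Z : Scheme} {f : X ⟶ Y}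
    {j : Y ⟶ Z} [IsOpenImmersion j] (h : SchemeTheoreticallyDominant (f ≫ j)) :
    SchemeTheoreticallyDominant f := by
  intro V
  have hinj : Function.Injective (f.app (j ⁻¹ᵁ j ''ᵁ V)) :=
    .of_comp_right (f := f.app (j ⁻¹ᵁ j ''ᵁ V)) (g := j.app (j ''ᵁ V)) (h (j ''ᵁ V))
      (ConcreteCategory.bijective_of_isIso (j.app (j ''ᵁ V))).2
  rwa [j.preimage_image_eq V] at hinj

lemma schemeTheoreticallyDominant_homOfLE {X : Scheme} {U V : X.Opens} (h : U ≤ V)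
    (hU : SchemeTheoreticallyDominant U.ι) : SchemeTheoreticallyDominant (X.homOfLE h) :=
  .of_comp_of_isOpenImmersion (j := V.ι) (by rwa [Scheme.homOfLE_ι])

lemma isIso_of_isClosedImmersion_of_schemeTheoreticallyDominant {X Y : Scheme} (f : X ⟶ Y)
    [IsClosedImmersion f] (hf : SchemeTheoreticallyDominant f) : IsIso f := by
  refine IsClosedImmersion.isIso_iff_ker_eq_bot.mpr (Scheme.IdealSheafData.ext ?_)
  funext U
  simpa [f.ker_apply U, ← RingHom.injective_iff_ker_eq_bot] using hf U

lemma AlgebraicGeometry.Scheme.Opens.le_of_comp_ι_eq {X : Scheme} {U W : X.Opens} (t : W.toScheme ⟶ U)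
    (h : t ≫ U.ι = W.ι) : W ≤ U := by
  intro x hx
  rw [← SetLike.mem_coe, ← Scheme.Opens.range_ι U]
  exact ⟨t ⟨x, hx⟩, congr($h ⟨x, hx⟩)⟩

lemma ext_of_schemeTheoreticallyDominant_of_isSeparated {W X Y Z : Scheme} {f g : X ⟶ Y}
    (s : Y ⟶ Z) [IsSeparated s] (h : f ≫ s = g ≫ s)
    (ι : W ⟶ X) (hι : SchemeTheoreticallyDominant ι) (hU : ι ≫ f = ι ≫ g) : f = g := by
  let f' : Over.mk (f ≫ s) ⟶ Over.mk s := Over.homMk f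
  let g' : Over.mk (f ≫ s) ⟶ Over.mk s := Over.homMk g h.symm
  let ι' : Over.mk (ι ≫ f ≫ s) ⟶ Over.mk (f ≫ s) := Over.homMk ι
  have : IsSeparated (Over.mk s).hom := ‹_›
  have : IsIso (equalizer.ι f' g').left := by
    refine isIso_of_isClosedImmersion_of_schemeTheoreticallyDominant _
      (.of_comp (f := (equalizer.lift ι' ?_).left) ?_)
    · ext1; exact hU
    · rwa [← Over.comp_left, equalizer.lift_ι]
  rw [← cancel_epi (equalizer.ι f' g').left]
  exact congr($(equalizer.condition f' g').left)

lemma exists_retraction_of_isPullback_resLE {X Y Z S : Scheme} {a : X ⟶ Y} {c : X ⟶ Z}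
    {f : Y ⟶ S} {b : Z ⟶ S} (hcomm : a ≫ f = c ≫ b) {U : X.Opens} {UY : Y.Opens}
    {UZ : Z.Opens} {US : S.Opens} (ha : U ≤ a ⁻¹ᵁ UY) (hc : U ≤ c ⁻¹ᵁ UZ)
    (hf : UY ≤ f ⁻¹ᵁ US) (hb : UZ ≤ b ⁻¹ᵁ US)
    (hp : IsPullback (a.resLE UY U ha) (c.resLE UZ U hc) (f.resLE US UY hf) (b.resLE US UZ hb)) :
    ∃ t : (a ⁻¹ᵁ UY ⊓ c ⁻¹ᵁ UZ).toScheme ⟶ U,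
      X.homOfLE (le_inf ha hc) ≫ t = 𝟙 _ ∧ t ≫ U.ι ≫ a = (a ⁻¹ᵁ UY ⊓ c ⁻¹ᵁ UZ).ι ≫ a := by
  let t := hp.lift (a.resLE UY _ inf_le_left) (c.resLE UZ _ inf_le_right)
    (by simp only [Scheme.Hom.resLE_comp_resLE, hcomm])
  refine ⟨t, hp.hom_ext ?_ ?_, ?_⟩
  · rw [Category.assoc, hp.lift_fst, Scheme.Hom.map_resLE, Category.id_comp]
  · rw [Category.assoc, hp.lift_snd, Scheme.Hom.map_resLE, Category.id_comp]
  · rw [← a.resLE_comp_ι ha, hp.lift_fst_assoc, Scheme.Hom.resLE_comp_ι]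

theorem preimage_inter_preimage_eq_general
    (k : Type) [Field k]
    {N00 N01 N10 N11 : Scheme.{0}}
    (hu : N00 ⟶ N01) (vl : N00 ⟶ N10) (vr : N01 ⟶ N11) (hd : N10 ⟶ N11)
    (hcomm : hu ≫ vr = vl ≫ hd)
    (p11 : N11 ⟶ Spec (CommRingCat.of k))
    (h00 : SepFT (hu ≫ vr ≫ p11))
    (U00 : N00.Opens) (U01 : N01.Opens) (U10 : N10.Opens) (U11 : N11.Opens)
    (hd00 : SchemeTheoreticallyDominant U00.ι)
    (e_a : U00 ≤ hu ⁻¹ᵁ U01) (e_c : U00 ≤ vl ⁻¹ᵁ U10)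
    (e_f : U01 ≤ vr ⁻¹ᵁ U11) (e_b : U10 ≤ hd ⁻¹ᵁ U11)
    (hsq : IsElemNisnevichSquare
      (hu.resLE U01 U00 e_a) (vl.resLE U10 U00 e_c)
      (vr.resLE U11 U01 e_f) (hd.resLE U11 U10 e_b)) :
    hu ⁻¹ᵁ U01 ⊓ vl ⁻¹ᵁ U10 = U00 := by
  obtain ⟨-, -, hp, -⟩ := hsq
  obtain ⟨t, ht_retraction, ht_hu⟩ :=
    exists_retraction_of_isPullback_resLE hcomm e_a e_c e_f e_b hp
  have : IsSeparated (hu ≫ vr ≫ p11) := h00.1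
  have : IsSeparated hu := .of_comp hu (vr ≫ p11)
  refine le_antisymm (Scheme.Opens.le_of_comp_ι_eq t ?_) (le_inf e_a e_c)
  refine ext_of_schemeTheoreticallyDominant_of_isSeparated hu (by rwa [Category.assoc]) _
    (schemeTheoreticallyDominant_homOfLE (le_inf e_a e_c) hd00) ?_
  rw [reassoc_of% ht_retraction, Scheme.homOfLE_ι]

/-- Given a commutative square of separated finite-type `k`-schemes `N(ij)` containing
scheme-theoretically dense open subschemes `S(ij)` which are respected by the square maps and
form an elementary Nisnevich square, one has
`h_u⁻¹(S(01)) ∩ v_l⁻¹(S(10)) = S(00)` as open subschemes of `N(00)`. -/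
theorem preimage_inter_preimage_eq
    (k : Type) [Field k]
    {N00 N01 N10 N11 : Scheme.{0}}
    (hu : N00 ⟶ N01) (vl : N00 ⟶ N10) (vr : N01 ⟶ N11) (hd : N10 ⟶ N11)
    (hcomm : hu ≫ vr = vl ≫ hd)
    (p11 : N11 ⟶ Spec (CommRingCat.of k))
    (h11 : SepFT p11) (h01 : SepFT (vr ≫ p11)) (h10 : SepFT (hd ≫ p11))
    (h00 : SepFT (hu ≫ vr ≫ p11))
    (U00 : N00.Opens) (U01 : N01.Opens) (U10 : N10.Opens) (U11 : N11.Opens)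
    (hd00 : SchemeTheoreticallyDominant U00.ι)
    (hd01 : SchemeTheoreticallyDominant U01.ι)
    (hd10 : SchemeTheoreticallyDominant U10.ι)
    (hd11 : SchemeTheoreticallyDominant U11.ι)
    (e_a : U00 ≤ hu ⁻¹ᵁ U01) (e_c : U00 ≤ vl ⁻¹ᵁ U10)
    (e_f : U01 ≤ vr ⁻¹ᵁ U11) (e_b : U10 ≤ hd ⁻¹ᵁ U11)
    (hsq : IsElemNisnevichSquare
      (hu.resLE U01 U00 e_a) (vl.resLE U10 U00 e_c)
      (vr.resLE U11 U01 e_f) (hd.resLE U11 U10 e_b)) :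
    hu ⁻¹ᵁ U01 ⊓ vl ⁻¹ᵁ U10 = U00 :=
  preimage_inter_preimage_eq_general k hu vl vr hd hcomm p11 h00 U00 U01 U10 U11 hd00 e_a e_c e_f
    e_b hsq
end

section
/- Let C and D be categories and u : C → D a functor. Suppose given, for every object d of D, a subcategory I(d) of the comma category d ↓ u (whose objects are pairs (c, ψ : d → u(c)) with c in C, and whose morphisms (c, ψ) → (c', ψ') are maps g : c → c' with u(g) ∘ ψ = ψ') such that: (i) I(d) is thin (between any two objects there is at most one morphism) and cofiltered; (ii) I(d) corepresents the functor c' ↦ Hom_D(d, u(c')), i.e. for every object c' of C the canonical map colim over (c, ψ) ∈ I(d)^op of Hom_C(c, c') → Hom_D(d, u(c')), sending g to u(g) ∘ ψ, is a bijection. Let Δ be a finite category such that for any objects a, b of Δ, if Hom(a, b) and Hom(b, a) are both nonempty then a = b, and every endomorphism in Δ is an identity. For a functor d̲ : Δ → D, let I(d̲) be the subcategory of the comma category d̲ ↓ u^Δ (where u^Δ : C^Δ → D^Δ is postcomposition with u) whose objects X satisfy X(δ) ∈ I(d̲(δ)) for every object δ of Δ, and whose morphisms f satisfy f(δ) ∈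 I(d̲(δ)) for every δ. Then I(d̲) is thin and cofiltered. -/
/-!
Thinness of `I(d̲)` is inherited componentwise from the `I(d)`, and a thin category is cofiltered
as soon as every finite family `X j` of objects has a common lower bound. Such a lower bound `W`
is built one object of `Δ` at a time, always adding an object `δ₀` that receives no arrow from the
objects already treated; this is possible because `Δ` is finite and has no loops. The value of `W`
at `δ₀` is an object of `I(d̲ δ₀)` that has to lift the finitely many arrows
`d̲ δ₀ ⟶ d̲ δ ⟶ u (W δ)`, map into every `X j δ₀` inside `I(d̲ δ₀)`, and make finitely many
functoriality and naturality squares commute (at `δ₀` itself there is nothing to check, since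
its only endomorphism is the identity). The two sides of each such square already agree after
applying `u`, so surjectivity in the corepresentability condition provides the lifts, injectivity
together with thinness equalizes the squares, and cofilteredness of `I(d̲ δ₀)` meets finitely
many such requirements at once.
-/

open CategoryTheory

universe v₁ v₂ u₁ u₂ w

/-- A (not necessarily full) subcategory of a category `C`, given by a set of objects and,
for each pair of objects, a set of morphisms, containing identities of member objects and
closed under composition. -/
structure Subcategory (C : Type u₁) [Category.{v₁} C] where
  objs : Set C
  homs : ∀ X Y : C, Set (X ⟶ Y)
  id_mem : ∀ X ∈ objs, 𝟙 X ∈ homs X X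
  comp_mem : ∀ {X Y Z : C}, X ∈ objs → Y ∈ objs → Z ∈ objs →
    ∀ {f : X ⟶ Y} {g : Y ⟶ Z}, f ∈ homs X Y → g ∈ homs Y Z → f ≫ g ∈ homs X Z

namespace Subcategory

variable {C : Type u₁} [Category.{v₁} C] (S : Subcategory C)

/-- The underlying category of a subcategory. -/
def Carrier : Type u₁ := {X : C // X ∈ S.objs}

instance : Category S.Carrier where
  Hom X Y := {f : X.1 ⟶ Y.1 // f ∈ S.homs X.1 Y.1}
  id X := ⟨𝟙 X.1, S.id_mem X.1 X.2⟩
  comp := fun {X Y Z} f g => ⟨f.1 ≫ g.1, S.comp_mem X.2 Y.2 Z.2 f.2 g.2⟩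
  id_comp f := Subtype.ext (Category.id_comp f.1)
  comp_id f := Subtype.ext (Category.comp_id f.1)
  assoc f g h := Subtype.ext (Category.assoc f.1 g.1 h.1)

end Subcategory

variable {C : Type u₁} [Category.{v₁} C] {D : Type u₂} [Category.{v₂} D]

/-- A subcategory `I` of the comma category `d ↓ u` *corepresents* the functor
`c' ↦ Hom_D(d, u c')` if the canonical map
`colim_{(c,ψ) ∈ I(d)ᵒᵖ} Hom_C(c, c') → Hom_D(d, u c')`, `g ↦ u(g) ∘ ψ`, is a bijection;
since `I` is cofiltered, this is expressed elementwise by surjectivity and the usual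
filtered-colimit description of equality. -/
def Corepresents (u : C ⥤ D) (d : D) (I : Subcategory (StructuredArrow d u)) : Prop :=
  (∀ (c' : C) (φ : d ⟶ u.obj c'),
    ∃ X ∈ I.objs, ∃ g : X.right ⟶ c', X.hom ≫ u.map g = φ) ∧
  (∀ X₁ X₂ : StructuredArrow d u, X₁ ∈ I.objs → X₂ ∈ I.objs →
    ∀ (c' : C) (g₁ : X₁.right ⟶ c') (g₂ : X₂.right ⟶ c'),
      X₁.hom ≫ u.map g₁ = X₂.hom ≫ u.map g₂ →
      ∃ X₀ ∈ I.objs, ∃ (h₁ : X₀ ⟶ X₁) (h₂ : X₀ ⟶ X₂),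
        h₁ ∈ I.homs X₀ X₁ ∧ h₂ ∈ I.homs X₀ X₂ ∧ h₁.right ≫ g₁ = h₂.right ≫ g₂)

variable (u : C ⥤ D) {Δ : Type w} [SmallCategory Δ]

/-- Evaluation of an object of `d̲ ↓ u^Δ` at an object `δ` of `Δ`, giving an object of
`d̲(δ) ↓ u`. -/
def evalObj (dd : Δ ⥤ D) (X : StructuredArrow dd ((Functor.whiskeringRight Δ C D).obj u)) (δ : Δ) :
    StructuredArrow (dd.obj δ) u :=
  StructuredArrow.mk (Y := X.right.obj δ) (X.hom.app δ)

/-- Evaluation of a morphism of `d̲ ↓ u^Δ` at an object `δ` of `Δ`. -/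
def evalMap (dd : Δ ⥤ D) {X Y : StructuredArrow dd ((Functor.whiskeringRight Δ C D).obj u)}
    (f : X ⟶ Y) (δ : Δ) : evalObj u dd X δ ⟶ evalObj u dd Y δ :=
  StructuredArrow.homMk (f.right.app δ) (by
    have h := NatTrans.congr_app (StructuredArrow.w f) δ
    rw [NatTrans.comp_app] at h
    exact h)

/-- The componentwise subcategory `I(d̲)` of the comma category `d̲ ↓ u^Δ`: objects and
morphisms which lie in `I(d̲(δ))` at every `δ`. -/
def diagramSubcat (I : ∀ d : D, Subcategory (StructuredArrow d u)) (dd : Δ ⥤ D) :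
    Subcategory (StructuredArrow dd ((Functor.whiskeringRight Δ C D).obj u)) where
  objs := {X | ∀ δ : Δ, evalObj u dd X δ ∈ (I (dd.obj δ)).objs}
  homs X Y := {f | ∀ δ : Δ,
    evalMap u dd f δ ∈ (I (dd.obj δ)).homs (evalObj u dd X δ) (evalObj u dd Y δ)}
  id_mem X hX δ := by
    have h : evalMap u dd (𝟙 X) δ = 𝟙 (evalObj u dd X δ) := by
      apply StructuredArrow.hom_ext
      simp [evalMap, evalObj]
    rw [h]
    exact (I (dd.obj δ)).id_mem _ (hX δ)
  comp_mem {X Y Z} hX hY hZ {f g} hf hg δ := by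
    have h : evalMap u dd (f ≫ g) δ = evalMap u dd f δ ≫ evalMap u dd g δ := by
      apply StructuredArrow.hom_ext
      simp [evalMap, evalObj]
    rw [h]
    exact (I (dd.obj δ)).comp_mem (hX δ) (hY δ) (hZ δ) (hf δ) (hg δ)

theorem CategoryTheory.IsCofiltered.of_isThin_of_exists_lowerBound {E : Type*} [Category E]
    (hthin : Quiver.IsThin E)
    (h : ∀ (J : Type) [Finite J] (X : J → E), ∃ W, ∀ j, Nonempty (W ⟶ X j)) :
    IsCofiltered E where
  cone_objs X Y := by
    obtain ⟨W, hW⟩ := h Bool (fun b => cond b X Y)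
    exact ⟨W, (hW true).some, (hW false).some, trivial⟩
  cone_maps X Y f g := ⟨X, 𝟙 X, by rw [(hthin X Y).elim f g]⟩
  nonempty := by
    obtain ⟨W, -⟩ := h Empty Empty.elim
    exact ⟨W⟩

namespace Subcategory

variable {E : Type*} [Category E] (S : Subcategory E)

theorem eq_of_isThin (hthin : Quiver.IsThin S.Carrier) {X Y : E} (hX : X ∈ S.objs)
    (hY : Y ∈ S.objs) {f g : X ⟶ Y} (hf : f ∈ S.homs X Y) (hg : g ∈ S.homs X Y) : f = g :=
  congrArg Subtype.val ((hthin ⟨X, hX⟩ ⟨Y, hY⟩).elim ⟨f, hf⟩ ⟨g, hg⟩)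

theorem exists_lowerBound [IsCofiltered S.Carrier] {T : Type*} [Finite T] (Y : T → E)
    (hY : ∀ t, Y t ∈ S.objs) : ∃ Z ∈ S.objs, ∀ t, ∃ k : Z ⟶ Y t, k ∈ S.homs Z (Y t) := by
  classical
  have := Fintype.ofFinite T
  let Y' : T → S.Carrier := fun t => ⟨Y t, hY t⟩
  obtain ⟨Z, hZ⟩ := IsCofiltered.inf_objs_exists (Finset.univ.image Y')
  refine ⟨Z.1, Z.2, fun t => ?_⟩
  obtain ⟨k⟩ := hZ (Finset.mem_image_of_mem Y' (Finset.mem_univ t))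
  exact ⟨k.1, k.2⟩

end Subcategory

namespace Corepresents

variable {u} {d : D} {I : Subcategory (StructuredArrow d u)}

theorem exists_comp_eq (hrep : Corepresents u d I) (hthin : Quiver.IsThin I.Carrier)
    {X : StructuredArrow d u} (hX : X ∈ I.objs) {c : C} {g₁ g₂ : X.right ⟶ c}
    (h : X.hom ≫ u.map g₁ = X.hom ≫ u.map g₂) :
    ∃ X₀ ∈ I.objs, ∃ k : X₀ ⟶ X, k ∈ I.homs X₀ X ∧ k.right ≫ g₁ = k.right ≫ g₂ := by
  obtain ⟨X₀, hX₀, k₁, k₂, hk₁, hk₂, hk⟩ := hrep.2 X X hX hX c g₁ g₂ h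
  obtain rfl := I.eq_of_isThin hthin hX₀ hX hk₁ hk₂
  exact ⟨X₀, hX₀, k₁, hk₁, hk⟩

theorem exists_forall_comp_eq [IsCofiltered I.Carrier] (hrep : Corepresents u d I)
    (hthin : Quiver.IsThin I.Carrier) {X : StructuredArrow d u} (hX : X ∈ I.objs)
    {T : Type*} [Finite T] {c : T → C} (g₁ g₂ : ∀ t, X.right ⟶ c t)
    (h : ∀ t, X.hom ≫ u.map (g₁ t) = X.hom ≫ u.map (g₂ t)) :
    ∃ X₀ ∈ I.objs, ∃ k : X₀ ⟶ X, k ∈ I.homs X₀ X ∧ ∀ t, k.right ≫ g₁ t = k.right ≫ g₂ t := by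
  choose Y hY k hk hkeq using fun t => hrep.exists_comp_eq hthin hX (h t)
  obtain ⟨X₀, hX₀, hX₀Y⟩ := I.exists_lowerBound (fun o : Option T => o.elim X Y)
    (Option.forall.2 ⟨hX, hY⟩)
  obtain ⟨l, hl⟩ := hX₀Y none
  refine ⟨X₀, hX₀, l, hl, fun t => ?_⟩
  obtain ⟨l', hl'⟩ : ∃ l' : X₀ ⟶ Y t, l' ∈ I.homs X₀ (Y t) := hX₀Y (some t)
  obtain rfl : l' ≫ k t = l := I.eq_of_isThin hthin hX₀ hX (I.comp_mem hX₀ (hY t) hX hl' (hk t)) hl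
  simp [hkeq]

theorem exists_lift_and_homs [IsCofiltered I.Carrier] (hrep : Corepresents u d I)
    {T : Type*} [Finite T] {c : T → C} (φ : ∀ t, d ⟶ u.obj (c t))
    {J : Type*} [Finite J] {E : J → StructuredArrow d u} (hE : ∀ j, E j ∈ I.objs) :
    ∃ Z ∈ I.objs, (∀ t, ∃ g : Z.right ⟶ c t, Z.hom ≫ u.map g = φ t) ∧
      ∀ j, ∃ m : Z ⟶ E j, m ∈ I.homs Z (E j) := by
  choose Y hY g hg using fun t => hrep.1 (c t) (φ t)
  obtain ⟨Z, hZ, hk⟩ := I.exists_lowerBound (Sum.elim Y E) (Sum.forall.2 ⟨hY, hE⟩)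
  refine ⟨Z, hZ, fun t => ?_, fun j => hk (.inr j)⟩
  obtain ⟨k, -⟩ : ∃ k : Z ⟶ Y t, _ := hk (.inl t)
  exact ⟨k.right ≫ g t, by rw [u.map_comp, StructuredArrow.w_assoc, hg]⟩

end Corepresents

theorem Finset.exists_minimal_wrt_hom {Δ : Type*} [Category Δ]
    (hnoloop : ∀ a b : Δ, Nonempty (a ⟶ b) → Nonempty (b ⟶ a) → a = b)
    (S : Finset Δ) (hS : S.Nonempty) : ∃ δ₀ ∈ S, ∀ δ ∈ S, Nonempty (δ ⟶ δ₀) → δ = δ₀ := by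
  let r : S → S → Prop := fun a b => Nonempty (a.1 ⟶ b.1) ∧ a ≠ b
  have : IsTrans S r := ⟨fun a b c ⟨⟨f⟩, hab⟩ ⟨⟨g⟩, _⟩ =>
    ⟨⟨f ≫ g⟩, by rintro rfl; exact hab (Subtype.ext (hnoloop _ _ ⟨f⟩ ⟨g⟩))⟩⟩
  have : Std.Irrefl r := ⟨fun a h => h.2 rfl⟩
  obtain ⟨δ, hδ⟩ := hS
  obtain ⟨⟨δ₀, hδ₀⟩, -, hmin⟩ :=
    (Finite.wellFounded_of_trans_of_irrefl r).has_min Set.univ ⟨⟨δ, hδ⟩, trivial⟩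
  exact ⟨δ₀, hδ₀, fun δ hδ hα => by_contra fun hne =>
    hmin ⟨δ, hδ⟩ trivial ⟨hα, fun h => hne (congrArg Subtype.val h)⟩⟩

section Diagram

variable {u} {I : ∀ d : D, Subcategory (StructuredArrow d u)} {dd : Δ ⥤ D}

theorem diagramSubcat_isThin (hthin : ∀ d, Quiver.IsThin (I d).Carrier) :
    Quiver.IsThin (diagramSubcat u I dd).Carrier := fun X Y => ⟨fun f g => by
  apply Subtype.ext
  ext δ
  exact congrArg CommaMorphism.right
    ((I _).eq_of_isThin (hthin _) (X.2 δ) (Y.2 δ) (f.2 δ) (g.2 δ))⟩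

variable (I) in
/-- The part over the objects `e i` of `Δ` of a common lower bound in `I(d̲)` of the family `X`. -/
structure PartialCone {J : Type*}
    (X : J → StructuredArrow dd ((Functor.whiskeringRight Δ C D).obj u))
    {ι : Type*} (e : ι → Δ) where
  obj (i : ι) : StructuredArrow (dd.obj (e i)) u
  mem (i : ι) : obj i ∈ (I (dd.obj (e i))).objs
  map {i i' : ι} : (e i ⟶ e i') → ((obj i).right ⟶ (obj i').right)
  map_id (i : ι) : map (𝟙 (e i)) = 𝟙 _
  map_comp {i i' i'' : ι} (α : e i ⟶ e i') (β : e i' ⟶ e i'') : map (α ≫ β) = map α ≫ map β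
  w {i i' : ι} (α : e i ⟶ e i') : (obj i).hom ≫ u.map (map α) = dd.map α ≫ (obj i').hom
  proj (j : J) (i : ι) : (obj i).right ⟶ (X j).right.obj (e i)
  proj_w (j : J) (i : ι) : (obj i).hom ≫ u.map (proj j i) = (X j).hom.app (e i)
  proj_mem (j : J) (i : ι) : StructuredArrow.homMk (proj j i) (proj_w j i) ∈
    (I (dd.obj (e i))).homs (obj i) (evalObj u dd (X j) (e i))
  proj_naturality (j : J) {i i' : ι} (α : e i ⟶ e i') :
    map α ≫ proj j i' = proj j i ≫ (X j).right.map α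

namespace PartialCone

variable {J : Type*} {X : J → StructuredArrow dd ((Functor.whiskeringRight Δ C D).obj u)}
  {ι : Type*} {e : ι → Δ}

variable (I X e) in
def ofIsEmpty [IsEmpty ι] : PartialCone I X e where
  obj := isEmptyElim
  mem := isEmptyElim
  map {i} := isEmptyElim i
  map_id := isEmptyElim
  map_comp {i} := isEmptyElim i
  w {i} := isEmptyElim i
  proj _ := isEmptyElim
  proj_w _ := isEmptyElim
  proj_mem _ := isEmptyElim
  proj_naturality _ {i} := isEmptyElim i

def comap (P : PartialCone I X e) {κ : Type*} (σ : κ → ι) : PartialCone I X (e ∘ σ) where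
  obj k := P.obj (σ k)
  mem k := P.mem (σ k)
  map := P.map
  map_id k := P.map_id (σ k)
  map_comp := P.map_comp
  w := P.w
  proj j k := P.proj j (σ k)
  proj_w j k := P.proj_w j (σ k)
  proj_mem j k := P.proj_mem j (σ k)
  proj_naturality j := P.proj_naturality j

section

variable (P : PartialCone I X (id : Δ → Δ))

def functor : Δ ⥤ C where
  obj δ := (P.obj δ).right
  map := P.map
  map_id := P.map_id
  map_comp := P.map_comp

def pt : StructuredArrow dd ((Functor.whiskeringRight Δ C D).obj u) :=
  StructuredArrow.mk (Y := P.functor)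
    { app δ := (P.obj δ).hom
      naturality _ _ α := (P.w α).symm }

def π (j : J) : P.pt ⟶ X j :=
  StructuredArrow.homMk
    { app := P.proj j
      naturality _ _ := P.proj_naturality j }
    (by ext δ; exact P.proj_w j δ)

theorem pt_mem : P.pt ∈ (diagramSubcat u I dd).objs := P.mem

theorem π_mem (j : J) : P.π j ∈ (diagramSubcat u I dd).homs P.pt (X j) := P.proj_mem j

end

structure Extension (P : PartialCone I X e) (δ₀ : Δ) where
  obj : StructuredArrow (dd.obj δ₀) u
  mem : obj ∈ (I (dd.obj δ₀)).objs
  map {i : ι} : (δ₀ ⟶ e i) → (obj.right ⟶ (P.obj i).right)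
  w {i : ι} (α : δ₀ ⟶ e i) : obj.hom ≫ u.map (map α) = dd.map α ≫ (P.obj i).hom
  map_comp {i i' : ι} (α : δ₀ ⟶ e i) (β : e i ⟶ e i') : map (α ≫ β) = map α ≫ P.map β
  proj (j : J) : obj.right ⟶ (X j).right.obj δ₀
  proj_w (j : J) : obj.hom ≫ u.map (proj j) = (X j).hom.app δ₀
  proj_mem (j : J) :
    StructuredArrow.homMk (proj j) (proj_w j) ∈ (I (dd.obj δ₀)).homs obj (evalObj u dd (X j) δ₀)
  proj_naturality (j : J) {i : ι} (α : δ₀ ⟶ e i) :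
    map α ≫ P.proj j i = proj j ≫ (X j).right.map α

def Extension.extend {P : PartialCone I X e} {δ₀ : Δ} (E : P.Extension δ₀)
    (hendo : ∀ α : δ₀ ⟶ δ₀, α = 𝟙 δ₀) (hmin : ∀ i, IsEmpty (e i ⟶ δ₀)) :
    PartialCone I X (fun o : Option ι => o.elim δ₀ e) where
  obj
    | none => E.obj
    | some i => P.obj i
  mem
    | none => E.mem
    | some i => P.mem i
  map {o o'} α := match o, o', α with
    | none, none, _ => 𝟙 _
    | none, some _, α => E.map α
    | some i, none, α => (hmin i).elim α
    | some _, some _, α => P.map α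
  map_id
    | none => rfl
    | some i => P.map_id i
  map_comp {o o' o''} α β := by
    rcases o with _ | i <;> rcases o' with _ | i' <;> rcases o'' with _ | i'' <;>
      dsimp only [Option.elim] at α β ⊢
    · simp
    · rw [hendo α]; simp
    · exact (hmin i').elim β
    · exact E.map_comp α β
    · exact (hmin i).elim α
    · exact (hmin i).elim α
    · exact (hmin i').elim β
    · exact P.map_comp α β
  w {o o'} α := by
    rcases o with _ | i <;> rcases o' with _ | i'
    · rw [hendo α]; simp
    · exact E.w α
    · exact (hmin i).elim α
    · exact P.w α
  proj j
    | none => E.proj j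
    | some i => P.proj j i
  proj_w j
    | none => E.proj_w j
    | some i => P.proj_w j i
  proj_mem j
    | none => E.proj_mem j
    | some i => P.proj_mem j i
  proj_naturality j {o o'} α := by
    rcases o with _ | i <;> rcases o' with _ | i' <;> dsimp only [Option.elim] at α ⊢
    · rw [hendo α, (X j).right.map_id]
      simp
    · exact E.proj_naturality j α
    · exact (hmin i).elim α
    · exact P.proj_naturality j α

theorem nonempty_extension (hthin : ∀ d, Quiver.IsThin (I d).Carrier)
    (hcof : ∀ d, IsCofiltered (I d).Carrier) (hrep : ∀ d, Corepresents u d (I d))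
    [∀ a b : Δ, Finite (a ⟶ b)] [Finite J] [Finite ι]
    (hX : ∀ j, X j ∈ (diagramSubcat u I dd).objs) (P : PartialCone I X e) (δ₀ : Δ) :
    Nonempty (P.Extension δ₀) := by
  have := hcof (dd.obj δ₀)
  obtain ⟨Z₁, hZ₁, hlift, hproj⟩ := (hrep (dd.obj δ₀)).exists_lift_and_homs
    (fun t : Σ i, δ₀ ⟶ e i => dd.map t.2 ≫ (P.obj t.1).hom) (fun j => hX j δ₀)
  choose G hG using hlift
  choose m hm using hproj
  -- typed with `(X j).right.obj δ₀` rather than `(evalObj u dd (X j) δ₀).right`, so that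
  -- `rw` and `simp` can compose it with `(X j).right.map _`
  let p (j : J) : Z₁.right ⟶ (X j).right.obj δ₀ := (m j).right
  have hpw (j : J) : Z₁.hom ≫ u.map (p j) = (X j).hom.app δ₀ := StructuredArrow.w (m j)
  obtain ⟨Z₂, hZ₂, k₂, hk₂, hfun⟩ := (hrep _).exists_forall_comp_eq (hthin _) hZ₁
    (T := Σ (i i' : ι), (δ₀ ⟶ e i) × (e i ⟶ e i'))
    (fun t => G ⟨t.2.1, t.2.2.1 ≫ t.2.2.2⟩) (fun t => G ⟨t.1, t.2.2.1⟩ ≫ P.map t.2.2.2)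
    (by
      rintro ⟨i, i', α, β⟩
      dsimp only at hG ⊢
      rw [hG, u.map_comp, ← Category.assoc, hG, Category.assoc, P.w, dd.map_comp,
        Category.assoc])
  obtain ⟨Z₃, hZ₃, k₃, hk₃, hnat⟩ := (hrep _).exists_forall_comp_eq (hthin _) hZ₂
    (T := J × Σ i, δ₀ ⟶ e i)
    (fun t => k₂.right ≫ G t.2 ≫ P.proj t.1 t.2.1)
    (fun t => k₂.right ≫ p t.1 ≫ (X t.1).right.map t.2.2)
    (by
      rintro ⟨j, i, α⟩
      dsimp only at hG ⊢
      rw [u.map_comp, StructuredArrow.w_assoc, u.map_comp, ← Category.assoc, hG,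
        Category.assoc, P.proj_w, u.map_comp, StructuredArrow.w_assoc, u.map_comp,
        ← Category.assoc, hpw]
      exact (X j).hom.naturality α)
  exact ⟨{
    obj := Z₃
    mem := hZ₃
    map {_} α := k₃.right ≫ k₂.right ≫ G ⟨_, α⟩
    w {_} α := by simp [hG]
    map_comp {_ _} α β := by simp [hfun ⟨_, _, α, β⟩]
    proj j := k₃.right ≫ k₂.right ≫ p j
    proj_w j := by simp [hpw]
    proj_mem j :=
      (I _).comp_mem hZ₃ hZ₂ (hX j δ₀) hk₃ ((I _).comp_mem hZ₂ hZ₁ (hX j δ₀) hk₂ (hm j))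
    proj_naturality j {_} α := by simpa using hnat ⟨j, _, α⟩ }⟩

end PartialCone

theorem exists_partialCone (hthin : ∀ d, Quiver.IsThin (I d).Carrier)
    (hcof : ∀ d, IsCofiltered (I d).Carrier) (hrep : ∀ d, Corepresents u d (I d))
    [∀ a b : Δ, Finite (a ⟶ b)]
    (hnoloop : ∀ a b : Δ, Nonempty (a ⟶ b) → Nonempty (b ⟶ a) → a = b)
    (hendo : ∀ (a : Δ) (α : a ⟶ a), α = 𝟙 a)
    {J : Type*} [Finite J] {X : J → StructuredArrow dd ((Functor.whiskeringRight Δ C D).obj u)}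
    (hX : ∀ j, X j ∈ (diagramSubcat u I dd).objs) (S : Finset Δ) :
    ∃ (ι : Type) (_ : Finite ι) (e : ι → Δ), Set.range e = S ∧ Nonempty (PartialCone I X e) := by
  classical
  induction S using Finset.strongInduction with
  | H S ih =>
  obtain rfl | hS := S.eq_empty_or_nonempty
  · exact ⟨Empty, inferInstance, Empty.elim, by rw [Finset.coe_empty, Set.range_eq_empty],
      ⟨.ofIsEmpty I X Empty.elim⟩⟩
  obtain ⟨δ₀, hδ₀, hmin⟩ := S.exists_minimal_wrt_hom hnoloop hS
  obtain ⟨ι, _, e, he, ⟨P⟩⟩ := ih (S.erase δ₀) (Finset.erase_ssubset hδ₀)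
  have hmin' (i : ι) : IsEmpty (e i ⟶ δ₀) := by
    have hi : e i ∈ S.erase δ₀ := Finset.mem_coe.1 (he ▸ Set.mem_range_self i)
    exact ⟨fun α => Finset.ne_of_mem_erase hi (hmin _ (Finset.mem_of_mem_erase hi) ⟨α⟩)⟩
  obtain ⟨E⟩ := P.nonempty_extension hthin hcof hrep hX δ₀
  refine ⟨Option ι, inferInstance, _, ?_, ⟨E.extend (hendo δ₀) hmin'⟩⟩
  rw [Option.range_elim, he, ← Finset.coe_insert, Finset.insert_erase hδ₀]

theorem diagramSubcat_exists_lowerBound (hthin : ∀ d, Quiver.IsThin (I d).Carrier)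
    (hcof : ∀ d, IsCofiltered (I d).Carrier) (hrep : ∀ d, Corepresents u d (I d))
    [FinCategory Δ]
    (hnoloop : ∀ a b : Δ, Nonempty (a ⟶ b) → Nonempty (b ⟶ a) → a = b)
    (hendo : ∀ (a : Δ) (α : a ⟶ a), α = 𝟙 a)
    (J : Type*) [Finite J] (X : J → (diagramSubcat u I dd).Carrier) :
    ∃ W, ∀ j, Nonempty (W ⟶ X j) := by
  obtain ⟨ι, _, e, he, ⟨P⟩⟩ := exists_partialCone hthin hcof hrep hnoloop hendo
    (X := fun j => (X j).1) (fun j => (X j).2) Finset.univ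
  choose σ hσ using Set.range_eq_univ.1 (by simpa using he)
  have hσ' : e ∘ σ = id := funext hσ
  let Q : PartialCone I (fun j => (X j).1) id := hσ' ▸ P.comap σ
  exact ⟨⟨Q.pt, Q.pt_mem⟩, fun j => ⟨⟨Q.π j, Q.π_mem j⟩⟩⟩

end Diagram

/-- If, for every `d`, the subcategory `I(d)` of `d ↓ u` is thin, cofiltered and corepresents
`c' ↦ Hom_D(d, u c')`, and if `Δ` is a finite category without loops, then for every diagram
`d̲ : Δ ⥤ D` the componentwise subcategory `I(d̲)` of `d̲ ↓ u^Δ` is thin and cofiltered. -/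
theorem diagramSubcat_thin_and_cofiltered
    (I : ∀ d : D, Subcategory (StructuredArrow d u))
    (hthin : ∀ d : D, Quiver.IsThin (I d).Carrier)
    (hcof : ∀ d : D, IsCofiltered (I d).Carrier)
    (hrep : ∀ d : D, Corepresents u d (I d))
    [FinCategory Δ]
    (hnoloop : ∀ a b : Δ, Nonempty (a ⟶ b) → Nonempty (b ⟶ a) → a = b)
    (hendo : ∀ (a : Δ) (e : a ⟶ a), e = 𝟙 a)
    (dd : Δ ⥤ D) :
    Quiver.IsThin (diagramSubcat u I dd).Carrier ∧
      IsCofiltered (diagramSubcat u I dd).Carrier :=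
  ⟨diagramSubcat_isThin hthin, .of_isThin_of_exists_lowerBound (diagramSubcat_isThin hthin)
    (diagramSubcat_exists_lowerBound hthin hcof hrep hnoloop hendo)⟩
end
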